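/- Minorization bound for the per-antenna channel gain: for every real z, z₀, and constants x̄ and c > 0, f(z) ≥ f(z₀) + B(z₀)·[(z - x̄)² - (z₀ - x̄)²], where f(z) = e^{-α[(z-x̄)² + c]}/((z-x̄)² + c) and B(z₀) = -e^{-α[(z₀-x̄)²+c]}·(α[(z₀-x̄)²+c] + 1)/((z₀-x̄)²+c)². -/
import Mathlib


theorem minorization_bound (α : ℝ) (hα : 0 ≤ α) (xbar c : ℝ) (hc : 0 < c) (z z₀ : ℝ) :
    Real.exp (-α * ((z - xbar) ^ 2 + c)) / ((z - xbar) ^ 2 + c) ≥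
      Real.exp (-α * ((z₀ - xbar) ^ 2 + c)) / ((z₀ - xbar) ^ 2 + c) +
        (-Real.exp (-α * ((z₀ - xbar) ^ 2 + c)) * (α * ((z₀ - xbar) ^ 2 + c) + 1) /
            ((z₀ - xbar) ^ 2 + c) ^ 2) *
          ((z - xbar) ^ 2 - (z₀ - xbar) ^ 2) := by
  set q : ℝ := (z - xbar) ^ 2 + c with hq_def
  set q₀ : ℝ := (z₀ - xbar) ^ 2 + c with hq0_def
  have hq : 0 < q := by positivity
  have hq0 : 0 < q₀ := by positivity
  have hE0 : 0 < Real.exp (-α * q₀) := Real.exp_pos _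
  -- key : exp(-αq) ≥ exp(-αq₀) * (1 - α(q - q₀))
  have key : Real.exp (-α * q₀) * (1 - α * (q - q₀)) ≤ Real.exp (-α * q) := by
    have h1 : (1 : ℝ) - α * (q - q₀) ≤ Real.exp (-(α * (q - q₀))) := by
      have := Real.add_one_le_exp (-(α * (q - q₀)))
      linarith
    calc Real.exp (-α * q₀) * (1 - α * (q - q₀))
        ≤ Real.exp (-α * q₀) * Real.exp (-(α * (q - q₀))) := by
          exact mul_le_mul_of_nonneg_left h1 hE0.le
      _ = Real.exp (-α * q) := by rw [← Real.exp_add]; ring_nf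
  have hd : (z - xbar) ^ 2 - (z₀ - xbar) ^ 2 = q - q₀ := by
    rw [hq_def, hq0_def]; ring
  rw [ge_iff_le, hd]
  have hrhs : Real.exp (-α * q₀) / q₀ +
      -Real.exp (-α * q₀) * (α * q₀ + 1) / q₀ ^ 2 * (q - q₀) =
      (Real.exp (-α * q₀) * q₀ - Real.exp (-α * q₀) * (α * q₀ + 1) * (q - q₀)) / q₀ ^ 2 := by
    field_simp; ring
  rw [hrhs, div_le_div_iff₀ (by positivity) hq]
  nlinarith [mul_le_mul_of_nonneg_right key (sq_nonneg q₀),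
    sq_nonneg (q - q₀), mul_nonneg hα hq0.le,
    mul_nonneg (mul_nonneg hE0.le (sq_nonneg (q - q₀))) (mul_nonneg hα hq0.le),
    mul_nonneg hE0.le (sq_nonneg (q - q₀))]
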